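/- Let G be the group with presentation ⟨s₁,s₂,s₃,s₄,h | [sₖ,h] for 1≤k≤4, s₁²h, s₂²h, s₃²h, s₄²h, s₁s₂s₃s₄h²⟩, and let φ : G → ℤ/2 be the homomorphism with φ(s₁)=φ(s₂)=1, φ(s₃)=φ(s₄)=0, φ(h)=0. Then φ does not factor through ℤ: there is no homomorphism ψ : G → ℤ with φ = (mod 2) ∘ ψ. -/

import Mathlib

/-! In any torsion-free quotient, hence in ℤ, the relations `s₁² = h⁻¹ = s₃²` force `s₁` and `s₃`
to have the same image; but `φ` separates them. -/

open FreeGroup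

/-- Relators of π₁(M₂), generators s₁=0, s₂=1, s₃=2, s₄=3, h=4. -/
def relsM2 : Set (FreeGroup (Fin 5)) :=
  { of 0 * of 4 * (of 0)⁻¹ * (of 4)⁻¹,
    of 1 * of 4 * (of 1)⁻¹ * (of 4)⁻¹,
    of 2 * of 4 * (of 2)⁻¹ * (of 4)⁻¹,
    of 3 * of 4 * (of 3)⁻¹ * (of 4)⁻¹,
    of 0 ^ 2 * of 4, of 1 ^ 2 * of 4, of 2 ^ 2 * of 4, of 3 ^ 2 * of 4,
    of 0 * of 1 * of 2 * of 3 * of 4 ^ 2 }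

/-- Reduction mod 2, multiplicatively. -/
def mod2 : Multiplicative ℤ →* Multiplicative (ZMod 2) :=
  AddMonoidHom.toMultiplicative (Int.castAddHom (ZMod 2))

lemma MonoidHom.eq_of_pow_eq_pow {G M : Type*} [Monoid G] [Monoid M] [IsMulTorsionFree M]
    (ψ : G →* M) {a b : G} {n : ℕ} (hn : n ≠ 0) (hab : a ^ n = b ^ n) : ψ a = ψ b :=
  pow_left_injective hn (by simpa only [map_pow] using congrArg ψ hab)

lemma relsM2_sq_of_zero_eq_sq_of_two :
    (PresentedGroup.of 0 : PresentedGroup relsM2) ^ 2 = PresentedGroup.of 2 ^ 2 := by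
  have h₀ : (PresentedGroup.of 0 : PresentedGroup relsM2) ^ 2 * PresentedGroup.of 4 = 1 :=
    PresentedGroup.one_of_mem (by simp [relsM2])
  have h₂ : (PresentedGroup.of 2 : PresentedGroup relsM2) ^ 2 * PresentedGroup.of 4 = 1 :=
    PresentedGroup.one_of_mem (by simp [relsM2])
  exact mul_right_cancel (h₀.trans h₂.symm)

theorem stmt3 (φ : PresentedGroup relsM2 →* Multiplicative (ZMod 2))
    (h1 : φ (PresentedGroup.of 0) = Multiplicative.ofAdd (1 : ZMod 2))
    (h3 : φ (PresentedGroup.of 2) = Multiplicative.ofAdd (0 : ZMod 2)) :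
    ¬ ∃ ψ : PresentedGroup relsM2 →* Multiplicative ℤ, φ = mod2.comp ψ := by
  rintro ⟨ψ, rfl⟩
  have hψ : ψ (PresentedGroup.of 0) = ψ (PresentedGroup.of 2) :=
    ψ.eq_of_pow_eq_pow two_ne_zero relsM2_sq_of_zero_eq_sq_of_two
  rw [MonoidHom.comp_apply, hψ, ← MonoidHom.comp_apply, h3] at h1
  exact absurd h1 (by decide)
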